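/- Let n₊, μ₊, n₋, μ₋, t be an edge configuration with ⟨n₊,n₋⟩ ≠ −1. Then ⟨μ₊, log_{n₊}(n₋)⟩ = ⟨μ₋, log_{n₋}(n₊)⟩. -/

import Mathlib

open scoped InnerProductSpace

noncomputable section
open Classical

abbrev E3 : Type := EuclideanSpace ℝ (Fin 3)

/-- Cross product on `E3`. -/
def cross3 (a b : E3) : E3 :=
  (EuclideanSpace.equiv (Fin 3) ℝ).symm
    (crossProduct ((EuclideanSpace.equiv (Fin 3) ℝ) a) ((EuclideanSpace.equiv (Fin 3) ℝ) b))

/-- Geodesic distance on the unit sphere. -/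
def sphDist (n₁ n₂ : E3) : ℝ := Real.arccos ⟪n₁, n₂⟫_ℝ

/-- The logarithmic map of the unit sphere. -/
def sphLog (n₁ n₂ : E3) : E3 :=
  if n₂ = n₁ then 0
  else (Real.arccos ⟪n₁, n₂⟫_ℝ / ‖n₂ - ⟪n₁, n₂⟫_ℝ • n₁‖) • (n₂ - ⟪n₁, n₂⟫_ℝ • n₁)

/-- Parallel transport along the shortest geodesic of the unit sphere. -/
def ptrans (n₁ n₂ ξ : E3) : E3 :=
  ξ - (⟪ξ, n₂⟫_ℝ / (1 + ⟪n₂, n₁⟫_ℝ)) • (n₂ + n₁)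

/-! The logarithm `log_{n₁} n₂` is the tangential part `n₂ - ⟪n₁, n₂⟫ n₁` scaled by a factor
symmetric in `n₁, n₂`. By Binet–Cauchy, `⟪μ, n₂ - ⟪n₁, n₂⟫ n₁⟫ = ⟪n₁ × μ, n₁ × n₂⟫` for a unit
vector `n₁`; for the two triangles this is `⟪t, n₊ × n₋⟫` and `⟪-t, n₋ × n₊⟫`, which agree by
antisymmetry of the cross product. -/

section InnerProductSpace

variable {V : Type*} [NormedAddCommGroup V] [InnerProductSpace ℝ V]

lemma norm_sub_inner_smul_sq {x y : V} (hx : ‖x‖ = 1) (hy : ‖y‖ = 1) :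
    ‖y - ⟪x, y⟫_ℝ • x‖ ^ 2 = 1 - ⟪x, y⟫_ℝ ^ 2 := by
  rw [norm_sub_sq_real, norm_smul, real_inner_smul_right, real_inner_comm x y, hx, hy,
    Real.norm_eq_abs, mul_pow, sq_abs]
  ring

lemma norm_sub_inner_smul_comm {x y : V} (hx : ‖x‖ = 1) (hy : ‖y‖ = 1) :
    ‖y - ⟪x, y⟫_ℝ • x‖ = ‖x - ⟪y, x⟫_ℝ • y‖ := by
  rw [← sq_eq_sq₀ (norm_nonneg _) (norm_nonneg _), norm_sub_inner_smul_sq hx hy,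
    norm_sub_inner_smul_sq hy hx, real_inner_comm]

end InnerProductSpace

lemma sphLog_eq_smul {n₁ : E3} (hn₁ : ‖n₁‖ = 1) (n₂ : E3) :
    sphLog n₁ n₂
      = (Real.arccos ⟪n₁, n₂⟫_ℝ / ‖n₂ - ⟪n₁, n₂⟫_ℝ • n₁‖) • (n₂ - ⟪n₁, n₂⟫_ℝ • n₁) := by
  rw [sphLog]
  split_ifs with h
  · rw [h, real_inner_self_eq_norm_sq, hn₁, one_pow, one_smul, sub_self, smul_zero]
  · rfl

lemma inner_eq_dotProduct (x y : E3) :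
    ⟪x, y⟫_ℝ = (EuclideanSpace.equiv (Fin 3) ℝ x) ⬝ᵥ (EuclideanSpace.equiv (Fin 3) ℝ y) := by
  simp [PiLp.inner_apply, dotProduct, mul_comm]

lemma cross3_anticomm (a b : E3) : cross3 a b = -cross3 b a := by
  rw [cross3, cross3, ← map_neg, cross_anticomm]

lemma inner_cross3_cross3 (a b c d : E3) :
    ⟪cross3 a b, cross3 c d⟫_ℝ = ⟪a, c⟫_ℝ * ⟪b, d⟫_ℝ - ⟪a, d⟫_ℝ * ⟪b, c⟫_ℝ := by
  simp only [inner_eq_dotProduct, cross3, ContinuousLinearEquiv.apply_symm_apply]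
  exact cross_dot_cross _ _ _ _

lemma inner_sub_inner_smul_eq_inner_cross3 {n : E3} (hn : ‖n‖ = 1) (μ m : E3) :
    ⟪μ, m - ⟪n, m⟫_ℝ • n⟫_ℝ = ⟪cross3 n μ, cross3 n m⟫_ℝ := by
  rw [inner_cross3_cross3, real_inner_self_eq_norm_sq, hn, inner_sub_right,
    real_inner_smul_right]
  ring

theorem inner_co_normal_log_symm_general (np μp nm μm t : E3)
    (hnp : ‖np‖ = 1) (hnm : ‖nm‖ = 1)
    (hcp : cross3 np μp = t) (hcm : cross3 nm μm = -t) :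
    ⟪μp, sphLog np nm⟫_ℝ = ⟪μm, sphLog nm np⟫_ℝ := by
  have htangent : ⟪μp, nm - ⟪np, nm⟫_ℝ • np⟫_ℝ = ⟪μm, np - ⟪nm, np⟫_ℝ • nm⟫_ℝ := by
    rw [inner_sub_inner_smul_eq_inner_cross3 hnp, inner_sub_inner_smul_eq_inner_cross3 hnm,
      hcp, hcm, cross3_anticomm nm np, inner_neg_neg]
  rw [sphLog_eq_smul hnp, sphLog_eq_smul hnm, real_inner_smul_right, real_inner_smul_right,
    htangent, norm_sub_inner_smul_comm hnp hnm, real_inner_comm nm np]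

theorem inner_co_normal_log_symm (np μp nm μm t : E3)
    (hnp : ‖np‖ = 1) (hμp : ‖μp‖ = 1) (hnm : ‖nm‖ = 1) (hμm : ‖μm‖ = 1) (ht : ‖t‖ = 1)
    (hcp : cross3 np μp = t) (hcm : cross3 nm μm = -t)
    (hne : ⟪np, nm⟫_ℝ ≠ -1) :
    ⟪μp, sphLog np nm⟫_ℝ = ⟪μm, sphLog nm np⟫_ℝ :=
  inner_co_normal_log_symm_general np μp nm μm t hnp hnm hcp hcm
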